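/- arXiv:1601.06867 — 5 statements merged into one kernel-verified Lean document; each statement's English description precedes it below -/
import Mathlib

section
/- Let π_q(X) denote the number of monic irreducible polynomials of degree X over F_q. Then for all X ≥ 1, q^X/X − 2·q^{X/2}/X ≤ π_q(X) ≤ q^X/X. -/
open Polynomial

/-- `π_q(X)`: the number of monic irreducible polynomials of degree exactly `X`
over the finite field `Fq`. -/
noncomputable def piq (Fq : Type) [Field Fq] [Fintype Fq] (X : ℕ) : ℕ :=
  Nat.card {f : Polynomial Fq // f.Monic ∧ f.natDegree = X ∧ Irreducible f}

/-!
The monic irreducible factors of `X ^ q ^ n - X` are exactly the monic irreducible polynomials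
whose degree divides `n`, each occurring once since `X ^ q ^ n - X` is separable. Comparing
degrees gives Gauss's formula `∑_{d ∣ n} d π_q(d) = q ^ n`. The term `d = n` alone gives the upper
bound; the remaining terms have `d ≤ n / 2` and contribute at most `∑_{d ≤ n/2} q ^ d ≤ 2 q^{n/2}`,
which gives the lower bound.
-/

open Finset UniqueFactorizationMonoid

theorem Nat.le_half_of_mem_properDivisors {n d : ℕ} (h : d ∈ n.properDivisors) : d ≤ n / 2 := by
  obtain ⟨⟨c, rfl⟩, hlt⟩ := Nat.mem_properDivisors.1 h
  have hc : 2 ≤ c := by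
    rcases c with _ | _ | c <;> simp_all
  rw [Nat.le_div_iff_mul_le two_pos]
  exact Nat.mul_le_mul_left d hc

theorem Nat.geomSum_range_succ_le_two_mul {q : ℕ} (hq : 2 ≤ q) (m : ℕ) :
    ∑ d ∈ range (m + 1), q ^ d ≤ 2 * q ^ m := by
  have := Nat.geomSum_lt hq (s := range m) fun _ => mem_range.1
  rw [sum_range_succ]
  omega

theorem Polynomial.sum_natDegree_toFinset_normalizedFactors {K : Type*} [Field K] [DecidableEq K]
    {g : K[X]} (hg : g.Monic) (hsq : Squarefree g) :
    ∑ f ∈ (normalizedFactors g).toFinset, f.natDegree = g.natDegree := by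
  have hnodup := (squarefree_iff_nodup_normalizedFactors hg.ne_zero).1 hsq
  have hprod : (normalizedFactors g).prod = g := by
    simpa [hg.leadingCoeff] using leadingCoeff_mul_prod_normalizedFactors g
  conv_rhs => rw [← hprod]
  rw [natDegree_multiset_prod _ (zero_notMem_normalizedFactors _), sum_eq_multiset_sum,
    Multiset.toFinset_val, hnodup.dedup]

namespace FiniteField

variable {k : Type} [Field k] [Fintype k] {n : ℕ}

theorem squarefree_X_pow_card_pow_sub_X (hn : n ≠ 0) :
    Squarefree (X ^ Fintype.card k ^ n - X : k[X]) := by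
  refine (galois_poly_separable (ringChar k) _ ?_).squarefree
  rw [← CharP.cast_eq_zero_iff k, Nat.cast_pow, Nat.cast_card_eq_zero, zero_pow hn]

theorem mem_normalizedFactors_X_pow_card_pow_sub_X [DecidableEq k] (hn : n ≠ 0) {f : k[X]} :
    f ∈ normalizedFactors (X ^ Fintype.card k ^ n - X) ↔
      f.Monic ∧ Irreducible f ∧ f.natDegree ∣ n := by
  rw [Polynomial.mem_normalizedFactors_iff (X_pow_card_pow_sub_X_ne_zero k hn Fintype.one_lt_card)]
  constructor
  · rintro ⟨hirr, hmon, hdvd⟩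
    exact ⟨hmon, hirr, hirr.natDegree_dvd_iff_dvd_X_pow_card_pow_sub_X.2 (by simpa using hdvd)⟩
  · rintro ⟨hmon, hirr, hdvd⟩
    exact ⟨hirr, hmon, by simpa using hirr.natDegree_dvd_iff_dvd_X_pow_card_pow_sub_X.1 hdvd⟩

theorem piq_eq_card_filter_normalizedFactors [DecidableEq k] (hn : n ≠ 0) {d : ℕ} (hd : d ∣ n) :
    piq k d = #{f ∈ (normalizedFactors (X ^ Fintype.card k ^ n - X : k[X])).toFinset |
      f.natDegree = d} := by
  rw [piq, ← Nat.card_eq_finsetCard]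
  refine Nat.card_congr (Equiv.subtypeEquivRight fun f => ?_)
  simp only [mem_filter, Multiset.mem_toFinset, mem_normalizedFactors_X_pow_card_pow_sub_X hn]
  constructor
  · rintro ⟨hmon, rfl, hirr⟩
    exact ⟨⟨hmon, hirr, hd⟩, rfl⟩
  · rintro ⟨⟨hmon, hirr, -⟩, rfl⟩
    exact ⟨hmon, rfl, hirr⟩

theorem sum_divisors_mul_piq (hn : n ≠ 0) :
    ∑ d ∈ n.divisors, d * piq k d = Fintype.card k ^ n := by
  classical
  set g : k[X] := X ^ Fintype.card k ^ n - X
  set S := (normalizedFactors g).toFinset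
  have hdeg : ∀ f ∈ S, f.natDegree ∈ n.divisors := fun f hf =>
    Nat.mem_divisors.2
      ⟨((mem_normalizedFactors_X_pow_card_pow_sub_X hn).1 (Multiset.mem_toFinset.1 hf)).2.2, hn⟩
  have hg : g.Monic :=
    monic_X_pow_sub (by rw [degree_X]; exact_mod_cast Nat.one_lt_pow hn Fintype.one_lt_card)
  calc ∑ d ∈ n.divisors, d * piq k d
      = ∑ d ∈ n.divisors, ∑ f ∈ S with f.natDegree = d, f.natDegree := by
        refine sum_congr rfl fun d hd => ?_
        rw [piq_eq_card_filter_normalizedFactors hn (Nat.dvd_of_mem_divisors hd),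
          sum_congr rfl fun f hf => (mem_filter.1 hf).2, sum_const, smul_eq_mul, mul_comm]
    _ = ∑ f ∈ S, f.natDegree := sum_fiberwise_of_maps_to hdeg _
    _ = g.natDegree :=
        sum_natDegree_toFinset_normalizedFactors hg (squarefree_X_pow_card_pow_sub_X hn)
    _ = Fintype.card k ^ n := X_pow_card_pow_sub_X_natDegree_eq k hn Fintype.one_lt_card

theorem mul_piq_le (hn : n ≠ 0) : n * piq k n ≤ Fintype.card k ^ n := by
  rw [← sum_divisors_mul_piq hn]
  exact single_le_sum (f := fun d => d * piq k d) (fun _ _ => Nat.zero_le _)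
    (Nat.mem_divisors_self n hn)

theorem card_pow_le_mul_piq_add (hn : n ≠ 0) :
    Fintype.card k ^ n ≤ n * piq k n + 2 * Fintype.card k ^ (n / 2) := by
  set q := Fintype.card k
  calc q ^ n = ∑ d ∈ n.properDivisors, d * piq k d + n * piq k n := by
        rw [← sum_divisors_mul_piq hn, ← Nat.cons_self_properDivisors hn, sum_cons, add_comm]
    _ ≤ ∑ d ∈ range (n / 2 + 1), q ^ d + n * piq k n := by
        gcongr
        calc ∑ d ∈ n.properDivisors, d * piq k d ≤ ∑ d ∈ n.properDivisors, q ^ d :=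
              sum_le_sum fun d hd => mul_piq_le (Nat.pos_of_mem_properDivisors hd).ne'
          _ ≤ ∑ d ∈ range (n / 2 + 1), q ^ d :=
              sum_le_sum_of_subset fun d hd =>
                mem_range.2 (Nat.lt_succ_of_le (Nat.le_half_of_mem_properDivisors hd))
    _ ≤ 2 * q ^ (n / 2) + n * piq k n := by
        gcongr; exact Nat.geomSum_range_succ_le_two_mul Fintype.one_lt_card _
    _ = n * piq k n + 2 * q ^ (n / 2) := add_comm _ _

end FiniteField

/-- **Prime Number Theorem for polynomials.** For all `X ≥ 1`,
`q^X/X − 2 q^{X/2}/X ≤ π_q(X) ≤ q^X/X`. -/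
theorem prime_number_theorem_poly (Fq : Type) [Field Fq] [Fintype Fq]
    (X : ℕ) (hX : 1 ≤ X) :
    (Fintype.card Fq : ℝ) ^ X / X - 2 * (Fintype.card Fq : ℝ) ^ ((X : ℝ) / 2) / X
        ≤ piq Fq X ∧
      (piq Fq X : ℝ) ≤ (Fintype.card Fq : ℝ) ^ X / X := by
  have hX0 : X ≠ 0 := Nat.one_le_iff_ne_zero.1 hX
  have hXpos : (0 : ℝ) < X := by exact_mod_cast hX
  have hlower : (Fintype.card Fq : ℝ) ^ X ≤ X * piq Fq X + 2 * (Fintype.card Fq : ℝ) ^ (X / 2) := by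
    exact_mod_cast FiniteField.card_pow_le_mul_piq_add hX0
  have hupper : (X : ℝ) * piq Fq X ≤ (Fintype.card Fq : ℝ) ^ X := by
    exact_mod_cast FiniteField.mul_piq_le hX0
  have hhalf : (Fintype.card Fq : ℝ) ^ (X / 2) ≤ (Fintype.card Fq : ℝ) ^ ((X : ℝ) / 2) := by
    rw [← Real.rpow_natCast]
    exact Real.rpow_le_rpow_of_exponent_le (by exact_mod_cast Fintype.card_pos) Nat.cast_div_le
  constructor
  · rw [div_sub_div_same, div_le_iff₀ hXpos]
    linarith
  · rw [le_div_iff₀ hXpos]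
    linarith
end

section
/- Let P_A be the product of all monic irreducible polynomials ϖ ≠ T of degree at most A in F_q[T]. Then |P_A|/φ(P_A) < exp(Σ_{r=1}^{A} 1/r) ≤ exp(log A + γ + 1/(2A)), where γ is the Euler–Mascheroni constant. -/
/-!
Every monic irreducible `ϖ` of degree `r` over `𝔽_q` divides `X ^ q ^ r - X`, so comparing degrees,
the number `n_r` of those different from `X` satisfies `r n_r + 1 ≤ q ^ r`. As `D = S`, the ratio is
`∏_{ϖ ∈ S} (1 - q^{-deg ϖ})⁻¹`, and `(1 - 1/x)⁻¹ = 1 + 1/(x - 1) < exp (1/(x - 1))` bounds it by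
`exp ∑_r n_r / (q ^ r - 1) ≤ exp ∑_r 1/r`.

For the second inequality, `H_n - log n - 1/(2n)` increases to `γ`: its increments are nonnegative
by the trapezoid bound `log y ≤ (y - 1/y)/2` for `y ≥ 1`, i.e. `sinh t ≥ t` for `t ≥ 0`.
-/

open Finset Filter Topology Real Polynomial

namespace Polynomial

variable {K : Type*} [Field K]

theorem isCoprime_of_monic_of_irreducible_of_ne {f g : K[X]} (hf : f.Monic) (hg : g.Monic)
    (hfi : Irreducible f) (hgi : Irreducible g) (hfg : f ≠ g) : IsCoprime f g :=
  hfi.coprime_iff_not_dvd.mpr fun h =>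
    hfg (eq_of_monic_of_associated hf hg (hfi.associated_of_dvd hgi h))

theorem prod_dvd_of_monic_of_irreducible {s : Finset K[X]} {p : K[X]}
    (hs : ∀ f ∈ s, f.Monic ∧ Irreducible f) (hp : ∀ f ∈ s, f ∣ p) : ∏ f ∈ s, f ∣ p :=
  prod_dvd_of_coprime (fun f hf g hg hfg => isCoprime_of_monic_of_irreducible_of_ne
    (hs f hf).1 (hs g hg).1 (hs f hf).2 (hs g hg).2 hfg) hp

theorem dvd_prod_iff_mem_of_monic_of_irreducible {s : Finset K[X]}
    (hs : ∀ g ∈ s, g.Monic ∧ Irreducible g) {f : K[X]} (hf : f.Monic) (hfi : Irreducible f) :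
    f ∣ ∏ g ∈ s, g ↔ f ∈ s := by
  refine ⟨fun h => ?_, fun h => dvd_prod_of_mem _ h⟩
  obtain ⟨g, hg, hfg⟩ := hfi.prime.exists_mem_finset_dvd h
  rwa [eq_of_monic_of_associated hf (hs g hg).1 (hfi.associated_of_dvd (hs g hg).2 hfg)]

variable [Fintype K]

theorem mul_card_add_one_le_card_pow {r : ℕ} (hr : r ≠ 0) {s : Finset K[X]}
    (hs : ∀ f ∈ s, f.Monic ∧ Irreducible f ∧ f ≠ X ∧ f.natDegree = r) :
    r * #s + 1 ≤ Fintype.card K ^ r := by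
  classical
  have hX : X ∉ s := fun h => (hs X h).2.2.1 rfl
  have hq : 1 < Fintype.card K := Fintype.one_lt_card
  have hdvd : ∏ f ∈ insert X s, f ∣ X ^ Fintype.card K ^ r - X := by
    refine prod_dvd_of_monic_of_irreducible ?_ ?_ <;> simp only [mem_insert, forall_eq_or_imp]
    · exact ⟨⟨monic_X, irreducible_X⟩, fun f hf => ⟨(hs f hf).1, (hs f hf).2.1⟩⟩
    · refine ⟨dvd_sub (dvd_pow_self X (by positivity)) dvd_rfl, fun f hf => ?_⟩
      rw [Fintype.card_eq_nat_card, ← (hs f hf).2.2.2]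
      exact (hs f hf).2.1.natDegree_dvd_iff_dvd_X_pow_card_pow_sub_X.mp dvd_rfl
  have hdeg : (∏ f ∈ insert X s, f).natDegree = r * #s + 1 := by
    rw [natDegree_prod_of_monic _ _ fun f hf => ?_, sum_insert hX, natDegree_X,
      sum_congr rfl fun f hf => (hs f hf).2.2.2, sum_const, smul_eq_mul, add_comm, mul_comm]
    obtain rfl | hf := mem_insert.mp hf
    · exact monic_X
    · exact (hs f hf).1
  calc r * #s + 1 = _ := hdeg.symm
    _ ≤ (X ^ Fintype.card K ^ r - X : K[X]).natDegree :=
      natDegree_le_of_dvd hdvd (FiniteField.X_pow_card_pow_sub_X_ne_zero K hr hq)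
    _ = _ := FiniteField.X_pow_card_pow_sub_X_natDegree_eq K hr hq

theorem sum_inv_card_pow_natDegree_sub_one_le {A : ℕ} {S : Finset K[X]}
    (hS : ∀ f ∈ S, f.Monic ∧ Irreducible f ∧ f ≠ X ∧ f.natDegree ≤ A) :
    ∑ f ∈ S, ((Fintype.card K : ℝ) ^ f.natDegree - 1)⁻¹ ≤ ∑ r ∈ Icc 1 A, (1 : ℝ) / r := by
  classical
  have hdeg : ∀ f ∈ S, f.natDegree ∈ Icc 1 A := fun f hf =>
    mem_Icc.mpr ⟨(hS f hf).2.1.natDegree_pos, (hS f hf).2.2.2⟩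
  rw [← sum_fiberwise_of_maps_to hdeg]
  refine sum_le_sum fun r hrA => ?_
  have hr : 0 < r := (mem_Icc.mp hrA).1
  have hqr : 1 < (Fintype.card K : ℝ) ^ r :=
    one_lt_pow₀ (by exact_mod_cast Fintype.one_lt_card) hr.ne'
  have hcount : (r : ℝ) * #{f ∈ S | f.natDegree = r} + 1 ≤ (Fintype.card K : ℝ) ^ r := by
    exact_mod_cast mul_card_add_one_le_card_pow hr.ne' fun f hf =>
      have ⟨hfS, hfr⟩ := mem_filter.mp hf
      ⟨(hS f hfS).1, (hS f hfS).2.1, (hS f hfS).2.2.1, hfr⟩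
  rw [sum_congr rfl fun f hf => by rw [(mem_filter.mp hf).2], sum_const, nsmul_eq_mul,
    ← div_eq_mul_inv, div_le_div_iff₀ (by linarith) (by positivity)]
  linarith

end Polynomial

namespace Real

theorem inv_one_sub_inv_lt_exp {x : ℝ} (hx : 1 < x) : (1 - x⁻¹)⁻¹ < exp (x - 1)⁻¹ := by
  have hx1 : x - 1 ≠ 0 := by linarith
  calc (1 - x⁻¹)⁻¹ = (x - 1)⁻¹ + 1 := by field_simp; ring
    _ < exp (x - 1)⁻¹ := add_one_lt_exp (inv_ne_zero hx1)

theorem inv_prod_one_sub_inv_lt_exp_sum {ι : Type*} {s : Finset ι} (hs : s.Nonempty)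
    {x : ι → ℝ} (hx : ∀ i ∈ s, 1 < x i) :
    (∏ i ∈ s, (1 - (x i)⁻¹))⁻¹ < exp (∑ i ∈ s, (x i - 1)⁻¹) := by
  rw [← prod_inv_distrib, exp_sum]
  refine prod_lt_prod_of_nonempty (fun i hi => ?_) (fun i hi => inv_one_sub_inv_lt_exp (hx i hi))
    hs
  exact inv_pos.mpr (sub_pos.mpr (inv_lt_one_of_one_lt₀ (hx i hi)))

theorem log_le_half_sub_inv {y : ℝ} (hy : 1 ≤ y) : log y ≤ (y - y⁻¹) / 2 := by
  simpa [sinh_log (by linarith : 0 < y)] using self_le_sinh_iff.mpr (log_nonneg hy)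

theorem log_add_one_sub_log_le {k : ℝ} (hk : 0 < k) :
    log (k + 1) - log k ≤ 1 / (2 * k) + 1 / (2 * (k + 1)) := by
  rw [← log_div (by positivity) hk.ne']
  calc log ((k + 1) / k) ≤ ((k + 1) / k - ((k + 1) / k)⁻¹) / 2 :=
        log_le_half_sub_inv (by rw [le_div_iff₀ hk]; linarith)
    _ = 1 / (2 * k) + 1 / (2 * (k + 1)) := by field_simp; ring

theorem monotone_harmonic_sub_log_sub_one_div_two_mul :
    Monotone fun n : ℕ => (harmonic n : ℝ) - log n - 1 / (2 * n) := by
  refine monotone_nat_of_le_succ fun n => ?_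
  rcases n with _ | n
  · norm_num
  · have hstep := log_add_one_sub_log_le (k := n + 1) (by positivity)
    have hhalf : ((n : ℝ) + 1 + 1)⁻¹ = 2 * (1 / (2 * (n + 1 + 1))) := by field_simp
    push_cast [harmonic_succ]
    linarith

theorem harmonic_le_log_add_eulerMascheroniConstant_add (n : ℕ) :
    (harmonic n : ℝ) ≤ log n + eulerMascheroniConstant + 1 / (2 * n) := by
  have hlim : Tendsto (fun n : ℕ => (harmonic n : ℝ) - log n - 1 / (2 * n)) atTop
      (𝓝 eulerMascheroniConstant) := by
    have h := tendsto_harmonic_sub_log.sub (tendsto_const_div_atTop_nhds_zero_nat (1 / 2 : ℝ))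
    rw [sub_zero] at h
    refine h.congr fun n => ?_
    rw [div_div]
  linarith [monotone_harmonic_sub_log_sub_one_div_two_mul.ge_of_tendsto hlim n]

end Real

/-- `D` is the set of prime divisors of `P_A = ∏ S`, so the denominator is
`φ(P_A) = |P_A| ∏_{ϖ ∣ P_A} (1 - 1/|ϖ|)` with `|m| = q ^ deg m`. -/
theorem totient_ratio_PA (Fq : Type) [Field Fq] [Fintype Fq]
    (A : ℕ) (hA : 1 ≤ A)
    (S : Finset (Polynomial Fq))
    (hS : ∀ f : Polynomial Fq,
      f ∈ S ↔ f.Monic ∧ Irreducible f ∧ f ≠ Polynomial.X ∧ f.natDegree ≤ A)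
    (D : Finset (Polynomial Fq))
    (hD : ∀ f : Polynomial Fq, f ∈ D ↔ f.Monic ∧ Irreducible f ∧ f ∣ (∏ g ∈ S, g)) :
    (Fintype.card Fq : ℝ) ^ (∏ g ∈ S, g).natDegree /
        ((Fintype.card Fq : ℝ) ^ (∏ g ∈ S, g).natDegree *
          ∏ f ∈ D, (1 - ((Fintype.card Fq : ℝ) ^ f.natDegree)⁻¹))
      < Real.exp (∑ r ∈ Finset.Icc 1 A, (1 : ℝ) / r) ∧
    Real.exp (∑ r ∈ Finset.Icc 1 A, (1 : ℝ) / r)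
      ≤ Real.exp (Real.log A + Real.eulerMascheroniConstant + 1 / (2 * A)) := by
  have hS' (f) (hf : f ∈ S) := (hS f).mp hf
  have hDS : D = S := by
    ext f
    refine (hD f).trans ⟨fun ⟨hm, hi, hdvd⟩ => ?_, fun hf => ⟨(hS' f hf).1, (hS' f hf).2.1,
      dvd_prod_of_mem _ hf⟩⟩
    exact (dvd_prod_iff_mem_of_monic_of_irreducible (fun g hg => ⟨(hS' g hg).1, (hS' g hg).2.1⟩)
      hm hi).mp hdvd
  have hne : S.Nonempty := ⟨X - C 1, (hS _).mpr ⟨monic_X_sub_C 1, irreducible_X_sub_C 1,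
    by simp, (natDegree_X_sub_C (1 : Fq)).trans_le hA⟩⟩
  have hq : (1 : ℝ) < Fintype.card Fq := by exact_mod_cast Fintype.one_lt_card
  refine ⟨?_, exp_le_exp.mpr ?_⟩
  · rw [hDS, div_mul_eq_div_div, div_self (by positivity), one_div]
    calc _ < exp (∑ f ∈ S, ((Fintype.card Fq : ℝ) ^ f.natDegree - 1)⁻¹) :=
          inv_prod_one_sub_inv_lt_exp_sum hne fun f hf =>
            one_lt_pow₀ hq (hS' f hf).2.1.natDegree_pos.ne'
      _ ≤ _ := exp_le_exp.mpr (sum_inv_card_pow_natDegree_sub_one_le hS')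
  · have hharmonic : ∑ r ∈ Icc 1 A, (1 : ℝ) / r = harmonic A := by
      simp [harmonic_eq_sum_Icc]
    exact hharmonic ▸ harmonic_le_log_add_eulerMascheroniConstant_add A
end

section
/- For every nonzero squarefree polynomial m ∈ F_q[T] coprime to T with deg m ≤ q, one has |m|/φ(m) < e; and for every nonzero squarefree m coprime to T with deg m > q, one has |m|/φ(m) ≤ e^γ·(log_q(deg m) + 1). -/
/-!
Write `Q = q` and `c(d) = -log (1 - Q⁻ᵈ)` (`eulerFactorLog Q d`). Then
`|m| / φ(m) = exp (∑_{ϖ ∣ m} c(deg ϖ))`, and all that is used about the prime divisors of `m` is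
that their degrees add up to at most `deg m`, that at most `Q - 1` of them are linear (as `T ∤ m`)
and that at most `Qᵈ / d` have degree `d`. Since `c(d) ≈ Q⁻ᵈ`, the sum is largest when the degree
budget is spent on the smallest degrees. For `deg m ≤ q` this gives at most
`(Q - 1) c(1) + c(2) / 2 < 1`. For `Qᵏ ≤ deg m ≤ Qᵏ⁺¹` the extremal value is affine in `deg m`;
at the two ends it is at most the harmonic numbers `H_k ≤ γ + log (k + 1)` and
`H_{k+1} ≤ γ + log (k + 2)`, and concavity of `log` interpolates between them to
`γ + log (log_q (deg m) + 1)`.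
-/

open Polynomial Finset Real

theorem Real.neg_log_one_sub_le {x : ℝ} (hx₀ : 0 < x) (hx₁ : x ≤ 1 / 2) :
    -log (1 - x) ≤ x * (1 + x) := by
  have hpos : 0 < 1 - x := by linarith
  have hlog : 0 < log (1 - x)⁻¹ := log_pos ((one_lt_inv₀ hpos).2 (by linarith))
  -- `log t ≤ sinh (log t) = (t - t⁻¹) / 2` for `t = (1 - x)⁻¹ ≥ 1`
  have hsinh := (self_lt_sinh_iff.2 hlog).le
  rw [sinh_log (inv_pos.2 hpos), inv_inv, log_inv] at hsinh
  refine hsinh.trans ?_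
  rw [div_le_iff₀ two_pos, sub_le_iff_le_add, inv_le_iff_one_le_mul₀ hpos]
  nlinarith [mul_nonneg (sq_nonneg x) (by linarith : 0 ≤ 1 - 2 * x)]

noncomputable def eulerFactorLog (Q : ℝ) (d : ℕ) : ℝ := -log (1 - (Q ^ d)⁻¹)

-- The number of monic irreducible factors of degree `d` of a polynomial over `𝔽_Q` coprime
-- to `X` is at most `factorCountBound Q d`.
noncomputable def factorCountBound (Q : ℝ) (d : ℕ) : ℝ := if d = 1 then Q - 1 else Q ^ d / d

section EulerFactorLog

variable {Q : ℝ}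

theorem inv_pow_le_half (hQ : 2 ≤ Q) {d : ℕ} (hd : 1 ≤ d) : (Q ^ d)⁻¹ ≤ 1 / 2 := by
  rw [one_div, inv_le_inv₀ (by positivity) two_pos]
  exact hQ.trans (le_self_pow₀ (by linarith) (by omega))

theorem eulerFactorLog_nonneg (hQ : 1 ≤ Q) (d : ℕ) : 0 ≤ eulerFactorLog Q d := by
  have : (Q ^ d)⁻¹ ≤ 1 := inv_le_one_of_one_le₀ (one_le_pow₀ hQ)
  rw [eulerFactorLog, neg_nonneg]
  exact log_nonpos (by linarith) (by linarith [inv_pos.2 (pow_pos (one_pos.trans_le hQ) d)])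

theorem eulerFactorLog_le_eulerFactorLog (hQ : 1 < Q) {d e : ℕ} (hd : 1 ≤ d) (hde : d ≤ e) :
    eulerFactorLog Q e ≤ eulerFactorLog Q d := by
  have hlt : (Q ^ d)⁻¹ < 1 := inv_lt_one_of_one_lt₀ (one_lt_pow₀ hQ (by omega))
  have hle : (Q ^ e)⁻¹ ≤ (Q ^ d)⁻¹ :=
    inv_anti₀ (by positivity) (pow_le_pow_right₀ hQ.le hde)
  rw [eulerFactorLog, eulerFactorLog, neg_le_neg_iff]
  exact log_le_log (by linarith) (by linarith)

theorem eulerFactorLog_le (hQ : 2 ≤ Q) {d : ℕ} (hd : 1 ≤ d) :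
    eulerFactorLog Q d ≤ (Q ^ d)⁻¹ * (1 + (Q ^ d)⁻¹) :=
  neg_log_one_sub_le (by positivity) (inv_pow_le_half hQ hd)

theorem exp_neg_eulerFactorLog (hQ : 1 < Q) {d : ℕ} (hd : 1 ≤ d) :
    exp (-eulerFactorLog Q d) = 1 - (Q ^ d)⁻¹ := by
  have : (Q ^ d)⁻¹ < 1 := inv_lt_one_of_one_lt₀ (one_lt_pow₀ hQ (by omega))
  rw [eulerFactorLog, neg_neg, exp_log (by linarith)]

theorem sub_one_mul_eulerFactorLog_one_le (hQ : 2 ≤ Q) :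
    (Q - 1) * eulerFactorLog Q 1 ≤ 1 - (Q ^ 2)⁻¹ := by
  have h := mul_le_mul_of_nonneg_left (eulerFactorLog_le hQ le_rfl) (by linarith : 0 ≤ Q - 1)
  refine h.trans (le_of_eq ?_)
  field_simp
  ring

theorem eulerFactorLog_div_lt (hQ : 2 ≤ Q) {d : ℕ} (hd : 2 ≤ d) :
    eulerFactorLog Q d / d < (Q ^ d)⁻¹ := by
  have h := eulerFactorLog_le hQ (d := d) (by omega)
  have hhalf := inv_pow_le_half hQ (d := d) (by omega)
  have hd' : (2 : ℝ) ≤ d := by exact_mod_cast hd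
  have hpos : 0 < (Q ^ d)⁻¹ := by positivity
  rw [div_lt_iff₀ (by linarith)]
  nlinarith

end EulerFactorLog

section FactorCountBound

variable {Q : ℝ}

theorem factorCountBound_nonneg (hQ : 1 ≤ Q) (d : ℕ) : 0 ≤ factorCountBound Q d := by
  unfold factorCountBound
  split_ifs
  · linarith
  · positivity

theorem pow_sub_one_le_factorCountBound_mul {d : ℕ} (hd : 1 ≤ d) :
    Q ^ d - 1 ≤ factorCountBound Q d * d := by
  unfold factorCountBound
  split_ifs with h
  · simp [h]
  · rw [div_mul_cancel₀ _ (by positivity)]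
    linarith

/-- The slack `(Q ^ (k + 1))⁻¹` keeps the induction going: the error term `(Q ^ k)⁻¹ / k` of
the `k`-th summand is at most `(Q ^ k)⁻¹ - (Q ^ (k + 1))⁻¹`. -/
theorem sum_factorCountBound_mul_eulerFactorLog_le (hQ : 2 ≤ Q) {k : ℕ} (hk : 1 ≤ k) :
    ∑ d ∈ Icc 1 k, factorCountBound Q d * eulerFactorLog Q d
      ≤ harmonic k - (Q ^ (k + 1))⁻¹ := by
  induction k, hk using Nat.le_induction with
  | base => simpa [factorCountBound] using sub_one_mul_eulerFactorLog_one_le hQ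
  | succ k hk ih =>
    have hN : factorCountBound Q (k + 1) = Q ^ (k + 1) / (k + 1 : ℕ) := if_neg (by omega)
    have hc := eulerFactorLog_le hQ (d := k + 1) (by omega)
    have hk' : (1 : ℝ) ≤ k := by exact_mod_cast hk
    have hpos : 0 < Q ^ (k + 1) := by positivity
    have hterm : factorCountBound Q (k + 1) * eulerFactorLog Q (k + 1)
        ≤ ((k + 1 : ℕ) : ℝ)⁻¹ + (Q ^ (k + 1))⁻¹ - (Q ^ (k + 1 + 1))⁻¹ := by
      rw [hN]
      refine (mul_le_mul_of_nonneg_left hc (by positivity)).trans ?_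
      rw [pow_succ Q (k + 1), mul_inv]
      have hQinv : Q⁻¹ ≤ 1 / 2 := by simpa using inv_pow_le_half hQ (d := 1) le_rfl
      field_simp
      push_cast
      nlinarith [mul_le_mul_of_nonneg_left hQinv (by positivity : (0 : ℝ) ≤ k + 1)]
    rw [sum_Icc_succ_top (by omega), harmonic_succ]
    push_cast at hterm ⊢
    linarith

end FactorCountBound

theorem harmonic_le_eulerMascheroniConstant_add_log (k : ℕ) :
    (harmonic k : ℝ) ≤ eulerMascheroniConstant + log (k + 1) := by
  have := eulerMascheroniSeq_lt_eulerMascheroniConstant k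
  rw [eulerMascheroniSeq] at this
  linarith

/- `eulerFactorSlope Q k * n + eulerFactorIntercept Q k` is the value of `∑ c(deg ϖ)` in the
extremal configuration for a degree budget `n ∈ [Q ^ k, Q ^ (k + 1)]`: all admissible factors of
degree `≤ k` (`factorCountBound Q d` of degree `d`), the remaining degree spent on factors of
degree `k + 1`. -/
noncomputable def eulerFactorSlope (Q : ℝ) (k : ℕ) : ℝ := eulerFactorLog Q (k + 1) / (k + 1)

noncomputable def eulerFactorIntercept (Q : ℝ) (k : ℕ) : ℝ :=
  ∑ d ∈ Icc 1 k, factorCountBound Q d * (eulerFactorLog Q d - eulerFactorSlope Q k * d)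

section AffineMajorant

variable {Q : ℝ} {k : ℕ}

theorem eulerFactorSlope_nonneg (hQ : 1 ≤ Q) (k : ℕ) : 0 ≤ eulerFactorSlope Q k :=
  div_nonneg (eulerFactorLog_nonneg hQ _) (by positivity)

theorem eulerFactorSlope_lt (hQ : 2 ≤ Q) (hk : 1 ≤ k) :
    eulerFactorSlope Q k < (Q ^ (k + 1))⁻¹ := by
  simpa [eulerFactorSlope] using eulerFactorLog_div_lt hQ (d := k + 1) (by omega)

theorem eulerFactorSlope_mul_succ (Q : ℝ) (k : ℕ) :
    eulerFactorSlope Q k * (k + 1) = eulerFactorLog Q (k + 1) :=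
  div_mul_cancel₀ _ (by positivity)

theorem eulerFactorLog_sub_eulerFactorSlope_mul_nonneg (hQ : 1 < Q) {d : ℕ} (hd : 1 ≤ d)
    (hdk : d ≤ k + 1) : 0 ≤ eulerFactorLog Q d - eulerFactorSlope Q k * d := by
  have hd' : (d : ℝ) ≤ k + 1 := by exact_mod_cast hdk
  have := mul_le_mul_of_nonneg_left hd' (eulerFactorSlope_nonneg hQ.le k)
  linarith [eulerFactorLog_le_eulerFactorLog hQ hd hdk, eulerFactorSlope_mul_succ Q k]

theorem eulerFactorLog_le_eulerFactorSlope_mul (hQ : 1 < Q) {d : ℕ} (hkd : k + 1 ≤ d) :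
    eulerFactorLog Q d ≤ eulerFactorSlope Q k * d := by
  have hd' : (k + 1 : ℝ) ≤ d := by exact_mod_cast hkd
  have := mul_le_mul_of_nonneg_left hd' (eulerFactorSlope_nonneg hQ.le k)
  linarith [eulerFactorLog_le_eulerFactorLog hQ (by omega) hkd, eulerFactorSlope_mul_succ Q k]

theorem eulerFactorIntercept_eq (Q : ℝ) (k : ℕ) :
    eulerFactorIntercept Q k = ∑ d ∈ Icc 1 k, factorCountBound Q d * eulerFactorLog Q d
      - eulerFactorSlope Q k * ∑ d ∈ Icc 1 k, factorCountBound Q d * d := by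
  rw [eulerFactorIntercept, mul_sum, ← sum_sub_distrib]
  exact sum_congr rfl fun d _ ↦ by ring

theorem eulerFactorSlope_mul_pow_add_eulerFactorIntercept_le (hQ : 2 ≤ Q) (hk : 1 ≤ k) :
    eulerFactorSlope Q k * Q ^ k + eulerFactorIntercept Q k ≤ harmonic k := by
  have hM : Q ^ k - 1 ≤ ∑ d ∈ Icc 1 k, factorCountBound Q d * d :=
    (pow_sub_one_le_factorCountBound_mul hk).trans <|
      single_le_sum (f := fun d : ℕ ↦ factorCountBound Q d * d)
        (fun d _ ↦ mul_nonneg (factorCountBound_nonneg (by linarith) d) d.cast_nonneg)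
        (mem_Icc.2 ⟨hk, le_rfl⟩)
  have hμ : 0 ≤ eulerFactorSlope Q k := eulerFactorSlope_nonneg (by linarith) k
  rw [eulerFactorIntercept_eq]
  nlinarith [sum_factorCountBound_mul_eulerFactorLog_le hQ hk, eulerFactorSlope_lt hQ hk]

theorem eulerFactorSlope_mul_pow_succ_add_eulerFactorIntercept_le (hQ : 2 ≤ Q) (hk : 1 ≤ k) :
    eulerFactorSlope Q k * Q ^ (k + 1) + eulerFactorIntercept Q k ≤ harmonic (k + 1) := by
  have hM : 0 ≤ ∑ d ∈ Icc 1 k, factorCountBound Q d * d :=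
    sum_nonneg fun d _ ↦ mul_nonneg (factorCountBound_nonneg (by linarith) d) d.cast_nonneg
  have hμ : 0 ≤ eulerFactorSlope Q k := eulerFactorSlope_nonneg (by linarith) k
  have hlast : eulerFactorSlope Q k * Q ^ (k + 1)
      = factorCountBound Q (k + 1) * eulerFactorLog Q (k + 1) := by
    rw [eulerFactorSlope, factorCountBound, if_neg (by omega)]
    push_cast
    ring
  have h := sum_factorCountBound_mul_eulerFactorLog_le hQ (k := k + 1) (by omega)
  rw [sum_Icc_succ_top (by omega)] at h
  rw [eulerFactorIntercept_eq]
  nlinarith [inv_pos.2 (pow_pos (by linarith : (0 : ℝ) < Q) (k + 1 + 1))]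

end AffineMajorant

/-- Writing `x = a Q ^ k + b Q ^ (k + 1)` with `a + b = 1`, concavity of `log` gives both
`a log (k + 1) + b log (k + 2) ≤ log (k + 1 + b)` and `k + b ≤ log x / log Q`. -/
theorem Real.affine_le_log_log_div_log_add_one {Q x α β : ℝ} {k : ℕ} (hQ : 1 < Q)
    (hx₀ : Q ^ k ≤ x) (hx₁ : x ≤ Q ^ (k + 1))
    (h₀ : α * Q ^ k + β ≤ log (k + 1)) (h₁ : α * Q ^ (k + 1) + β ≤ log (k + 2)) :
    α * x + β ≤ log (log x / log Q + 1) := by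
  have hy₀ : 0 < Q ^ k := by positivity
  have hy : Q ^ k < Q ^ (k + 1) := pow_lt_pow_right₀ hQ k.lt_succ_self
  have hne : Q ^ (k + 1) - Q ^ k ≠ 0 := by linarith
  set a := (Q ^ (k + 1) - x) / (Q ^ (k + 1) - Q ^ k)
  set b := (x - Q ^ k) / (Q ^ (k + 1) - Q ^ k)
  have ha : 0 ≤ a := div_nonneg (by linarith) (by linarith)
  have hb : 0 ≤ b := div_nonneg (by linarith) (by linarith)
  have hab : a + b = 1 := by
    rw [← add_div, div_eq_one_iff_eq hne]
    ring
  have hx : a * Q ^ k + b * Q ^ (k + 1) = x := by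
    simp only [a, b]
    field_simp
    ring
  clear_value a b
  have hconc := strictConcaveOn_log_Ioi.concaveOn
  have hlogk : a * log (k + 1) + b * log (k + 2) ≤ log (a * (k + 1) + b * (k + 2)) :=
    hconc.2 (Set.mem_Ioi.2 (by positivity)) (Set.mem_Ioi.2 (by positivity)) ha hb hab
  have hlogx : a * log (Q ^ k) + b * log (Q ^ (k + 1)) ≤ log x := by
    rw [← hx]
    exact hconc.2 (Set.mem_Ioi.2 hy₀) (Set.mem_Ioi.2 (hy₀.trans hy)) ha hb hab
  have hkb : (k : ℝ) + b ≤ log x / log Q := by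
    rw [le_div_iff₀ (log_pos hQ)]
    rw [log_pow, log_pow] at hlogx
    push_cast at hlogx
    linear_combination hlogx - k * log Q * hab
  calc α * x + β = a * (α * Q ^ k + β) + b * (α * Q ^ (k + 1) + β) := by
        rw [← hx]
        linear_combination -β * hab
    _ ≤ a * log (k + 1) + b * log (k + 2) := by gcongr
    _ ≤ log (a * (k + 1) + b * (k + 2)) := hlogk
    _ = log (k + 1 + b) := by congr 1; linear_combination (k + 1 : ℝ) * hab
    _ ≤ log (log x / log Q + 1) := log_le_log (by positivity) (by linarith)

section DegreeProfile

variable {ι : Type*} (s : Finset ι) (deg : ι → ℕ) {Q : ℝ}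

theorem prod_one_sub_inv_pow_eq_exp_neg_sum (hQ : 1 < Q) (hdeg : ∀ i ∈ s, 1 ≤ deg i) :
    ∏ i ∈ s, (1 - (Q ^ deg i)⁻¹) = exp (-∑ i ∈ s, eulerFactorLog Q (deg i)) := by
  rw [← sum_neg_distrib, exp_sum]
  exact prod_congr rfl fun i hi ↦ (exp_neg_eulerFactorLog hQ (hdeg i hi)).symm

theorem sum_eulerFactorLog_lt_one {n : ℕ} (hQ : 2 ≤ Q) (hdeg : ∀ i ∈ s, 1 ≤ deg i)
    (hsum : ∑ i ∈ s, deg i ≤ n) (hlin : (#{i ∈ s | deg i = 1} : ℝ) ≤ Q - 1) (hn : n ≤ Q) :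
    ∑ i ∈ s, eulerFactorLog Q (deg i) < 1 := by
  set c₁ := eulerFactorLog Q 1
  set c₂ := eulerFactorLog Q 2
  have hc₂ : 0 ≤ c₂ := eulerFactorLog_nonneg (by linarith) 2
  have hc₁₂ : c₂ ≤ c₁ := eulerFactorLog_le_eulerFactorLog (by linarith) le_rfl one_le_two
  -- a factor of degree `d ≥ 2` costs at most `c₂ / 2` per unit of degree
  have hterm : ∀ i ∈ s,
      eulerFactorLog Q (deg i)
        ≤ (if deg i = 1 then c₁ - c₂ / 2 else 0) + c₂ / 2 * deg i := by
    intro i hi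
    split_ifs with h
    · simp [h, c₁]
    · have h2 : 2 ≤ deg i := by have := hdeg i hi; omega
      have h2' : (2 : ℝ) ≤ deg i := by exact_mod_cast h2
      have : eulerFactorLog Q (deg i) ≤ c₂ :=
        eulerFactorLog_le_eulerFactorLog (by linarith) one_le_two h2
      nlinarith
  have hsum' : (∑ i ∈ s, deg i : ℝ) ≤ Q := le_trans (by exact_mod_cast hsum) hn
  calc ∑ i ∈ s, eulerFactorLog Q (deg i)
      ≤ ∑ i ∈ s, ((if deg i = 1 then c₁ - c₂ / 2 else 0) + c₂ / 2 * deg i) :=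
        sum_le_sum hterm
    _ = #{i ∈ s | deg i = 1} * (c₁ - c₂ / 2) + c₂ / 2 * ∑ i ∈ s, (deg i : ℝ) := by
      rw [sum_add_distrib, ← sum_filter, sum_const, nsmul_eq_mul, mul_sum]
    _ ≤ (Q - 1) * (c₁ - c₂ / 2) + c₂ / 2 * Q := by gcongr; linarith
    _ = (Q - 1) * c₁ + c₂ / 2 := by ring
    _ < 1 := by
      linarith [sub_one_mul_eulerFactorLog_one_le hQ, eulerFactorLog_div_lt hQ le_rfl]

theorem sum_eulerFactorLog_le_affine {n : ℕ} (hQ : 2 ≤ Q) (k : ℕ) (hdeg : ∀ i ∈ s, 1 ≤ deg i)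
    (hsum : ∑ i ∈ s, deg i ≤ n)
    (hcount : ∀ d, 1 ≤ d → (#{i ∈ s | deg i = d} : ℝ) ≤ factorCountBound Q d) :
    ∑ i ∈ s, eulerFactorLog Q (deg i)
      ≤ eulerFactorSlope Q k * n + eulerFactorIntercept Q k := by
  set μ := eulerFactorSlope Q k
  set w : ℕ → ℝ := fun d ↦ eulerFactorLog Q d - μ * d
  have hμ : 0 ≤ μ := eulerFactorSlope_nonneg (by linarith) k
  have hterm : ∀ i ∈ s,
      eulerFactorLog Q (deg i) ≤ μ * deg i + if deg i ∈ Icc 1 k then w (deg i) else 0 := by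
    intro i hi
    split_ifs with h
    · simp [w]
    · have : k + 1 ≤ deg i := by have := hdeg i hi; simp only [mem_Icc] at h; omega
      simpa using eulerFactorLog_le_eulerFactorSlope_mul (by linarith) this
  have hfiber : ∑ i ∈ s with deg i ∈ Icc 1 k, w (deg i)
      = ∑ d ∈ Icc 1 k, #{i ∈ s | deg i = d} * w d := by
    rw [← sum_fiberwise_eq_sum_filter]
    refine sum_congr rfl fun d _ ↦ ?_
    rw [sum_congr rfl fun i hi ↦ by rw [(mem_filter.1 hi).2], sum_const, nsmul_eq_mul]
  have hsum' : (∑ i ∈ s, deg i : ℝ) ≤ n := by exact_mod_cast hsum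
  calc ∑ i ∈ s, eulerFactorLog Q (deg i)
      ≤ ∑ i ∈ s, (μ * deg i + if deg i ∈ Icc 1 k then w (deg i) else 0) := sum_le_sum hterm
    _ = μ * ∑ i ∈ s, (deg i : ℝ) + ∑ d ∈ Icc 1 k, #{i ∈ s | deg i = d} * w d := by
      rw [sum_add_distrib, ← sum_filter, hfiber, mul_sum]
    _ ≤ μ * n + ∑ d ∈ Icc 1 k, factorCountBound Q d * w d := by
      gcongr with d hd
      · rw [mem_Icc] at hd
        exact eulerFactorLog_sub_eulerFactorSlope_mul_nonneg (by linarith) hd.1 (by omega)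
      · exact hcount d (mem_Icc.1 hd).1

theorem sum_eulerFactorLog_le_eulerMascheroniConstant_add_log {n k : ℕ} (hQ : 2 ≤ Q) (hk : 1 ≤ k)
    (hkn : Q ^ k ≤ n) (hnk : n ≤ Q ^ (k + 1)) (hdeg : ∀ i ∈ s, 1 ≤ deg i)
    (hsum : ∑ i ∈ s, deg i ≤ n)
    (hcount : ∀ d, 1 ≤ d → (#{i ∈ s | deg i = d} : ℝ) ≤ factorCountBound Q d) :
    ∑ i ∈ s, eulerFactorLog Q (deg i)
      ≤ eulerMascheroniConstant + log (log n / log Q + 1) := by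
  have h₀ := (eulerFactorSlope_mul_pow_add_eulerFactorIntercept_le hQ hk).trans
    (harmonic_le_eulerMascheroniConstant_add_log k)
  have h₁ := (eulerFactorSlope_mul_pow_succ_add_eulerFactorIntercept_le hQ hk).trans
    (harmonic_le_eulerMascheroniConstant_add_log (k + 1))
  rw [Nat.cast_add_one, add_assoc, one_add_one_eq_two] at h₁
  have := Real.affine_le_log_log_div_log_add_one (α := eulerFactorSlope Q k)
    (β := eulerFactorIntercept Q k - eulerMascheroniConstant) (by linarith) hkn hnk
    (by linarith) (by linarith)
  linarith [sum_eulerFactorLog_le_affine s deg hQ k hdeg hsum hcount]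

end DegreeProfile

namespace Polynomial

variable {K : Type*} [Field K]

theorem Monic.isCoprime_of_irreducible_of_ne {f g : K[X]} (hf : f.Monic) (hg : g.Monic)
    (hfi : Irreducible f) (hgi : Irreducible g) (hne : f ≠ g) : IsCoprime f g :=
  (hfi.coprime_iff_not_dvd).2 fun hdvd ↦
    hne (eq_of_monic_of_associated hf hg (hfi.associated_of_dvd hgi hdvd))

theorem sum_natDegree_le_of_forall_dvd {m : K[X]} (hm : m ≠ 0) (s : Finset K[X])
    (hs : ∀ f ∈ s, f.Monic ∧ Irreducible f ∧ f ∣ m) :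
    ∑ f ∈ s, f.natDegree ≤ m.natDegree := by
  have hprod : ∏ f ∈ s, f ∣ m := by
    refine prod_dvd_of_coprime (fun f hf g hg hne ↦ ?_) fun f hf ↦ (hs f hf).2.2
    exact (hs f hf).1.isCoprime_of_irreducible_of_ne (hs g hg).1 (hs f hf).2.1 (hs g hg).2.1 hne
  rw [← natDegree_prod _ _ fun f hf ↦ (hs f hf).2.1.ne_zero]
  exact natDegree_le_of_dvd hprod hm

variable [Fintype K]

-- Distinct monic irreducibles of degree `d` all divide `X ^ q ^ d - X`.
theorem card_mul_le_card_pow_of_natDegree_eq (d : ℕ) (s : Finset K[X])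
    (hs : ∀ f ∈ s, f.Monic ∧ Irreducible f ∧ f.natDegree = d) :
    #s * d ≤ Fintype.card K ^ d := by
  rcases Nat.eq_zero_or_pos d with rfl | hd
  · simp
  have hq : 1 < Fintype.card K := Fintype.one_lt_card
  have hdvd : ∀ f ∈ s, f.Monic ∧ Irreducible f ∧ f ∣ X ^ Fintype.card K ^ d - X := by
    intro f hf
    obtain ⟨hmon, hirr, hdeg⟩ := hs f hf
    refine ⟨hmon, hirr, ?_⟩
    rw [← Nat.card_eq_fintype_card, ← hirr.natDegree_dvd_iff_dvd_X_pow_card_pow_sub_X, hdeg]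
  have := sum_natDegree_le_of_forall_dvd
    (FiniteField.X_pow_card_pow_sub_X_ne_zero K hd.ne' hq) s hdvd
  rwa [FiniteField.X_pow_card_pow_sub_X_natDegree_eq K hd.ne' hq,
    sum_congr rfl fun f hf ↦ (hs f hf).2.2, sum_const, smul_eq_mul] at this

theorem card_add_one_le_card_of_natDegree_eq_one {m : K[X]} (hm : IsCoprime m X)
    (s : Finset K[X]) (hs : ∀ f ∈ s, f.Monic ∧ f.natDegree = 1 ∧ f ∣ m) :
    #s + 1 ≤ Fintype.card K := by
  classical
  have hlin : ∀ f ∈ s, f = X + C (f.coeff 0) := fun f hf ↦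
    (hs f hf).1.eq_X_add_C (hs f hf).2.1
  have hmaps : ∀ f ∈ s, f.coeff 0 ∈ univ.erase 0 := fun f hf ↦ mem_erase.2 ⟨fun h0 ↦ by
    have hX : X ∣ m := by
      have := (hs f hf).2.2
      rwa [hlin f hf, h0, map_zero, add_zero] at this
    exact not_isUnit_X (hm.isUnit_of_dvd' hX dvd_rfl), mem_univ _⟩
  have hinj : Set.InjOn (fun f : K[X] ↦ f.coeff 0) s := fun f hf g hg h ↦ by
    rw [hlin f hf, hlin g hg]
    exact congrArg (X + C ·) h
  have := card_le_card_of_injOn _ (fun f hf ↦ hmaps f hf) hinj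
  rw [card_erase_of_mem (mem_univ _), card_univ] at this
  have := Fintype.card_pos (α := K)
  omega

theorem card_filter_natDegree_eq_le_factorCountBound {m : K[X]} (hm : IsCoprime m X)
    (s : Finset K[X])
    (hs : ∀ f ∈ s, f.Monic ∧ Irreducible f ∧ f ∣ m) {d : ℕ} (hd : 1 ≤ d) :
    (#{f ∈ s | f.natDegree = d} : ℝ) ≤ factorCountBound (Fintype.card K) d := by
  unfold factorCountBound
  split_ifs with h
  · subst h
    have := card_add_one_le_card_of_natDegree_eq_one hm {f ∈ s | f.natDegree = 1} fun f hf ↦ by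
      obtain ⟨hf, hdeg⟩ := mem_filter.1 hf
      exact ⟨(hs f hf).1, hdeg, (hs f hf).2.2⟩
    rw [le_sub_iff_add_le]
    exact_mod_cast this
  · have := card_mul_le_card_pow_of_natDegree_eq d {f ∈ s | f.natDegree = d} fun f hf ↦ by
      obtain ⟨hf, hdeg⟩ := mem_filter.1 hf
      exact ⟨(hs f hf).1, (hs f hf).2.1, hdeg⟩
    rw [le_div_iff₀ (by positivity)]
    exact_mod_cast this

end Polynomial

theorem totient_ratio_bound_general (Fq : Type) [Field Fq] [Fintype Fq]
    (m : Polynomial Fq) (hm : m ≠ 0)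
    (hT : IsCoprime m Polynomial.X)
    (D : Finset (Polynomial Fq))
    (hD : ∀ f : Polynomial Fq, f ∈ D ↔ f.Monic ∧ Irreducible f ∧ f ∣ m) :
    (m.natDegree ≤ Fintype.card Fq →
      (Fintype.card Fq : ℝ) ^ m.natDegree /
          ((Fintype.card Fq : ℝ) ^ m.natDegree *
            ∏ f ∈ D, (1 - ((Fintype.card Fq : ℝ) ^ f.natDegree)⁻¹))
        < Real.exp 1) ∧
    (Fintype.card Fq < m.natDegree →
      (Fintype.card Fq : ℝ) ^ m.natDegree /
          ((Fintype.card Fq : ℝ) ^ m.natDegree *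
            ∏ f ∈ D, (1 - ((Fintype.card Fq : ℝ) ^ f.natDegree)⁻¹))
        ≤ Real.exp Real.eulerMascheroniConstant *
            (Real.log m.natDegree / Real.log (Fintype.card Fq) + 1)) := by
  have hq₁ : 1 < Fintype.card Fq := Fintype.one_lt_card
  have hq : (2 : ℝ) ≤ Fintype.card Fq := by exact_mod_cast hq₁
  have hs : ∀ f ∈ D, f.Monic ∧ Irreducible f ∧ f ∣ m := fun f hf ↦ (hD f).1 hf
  have hdeg : ∀ f ∈ D, 1 ≤ f.natDegree := fun f hf ↦ (hs f hf).2.1.natDegree_pos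
  have hsum := sum_natDegree_le_of_forall_dvd hm D hs
  have hcount := fun d ↦ card_filter_natDegree_eq_le_factorCountBound hT D hs (d := d)
  rw [prod_one_sub_inv_pow_eq_exp_neg_sum D natDegree (by linarith) hdeg, ← div_div,
    div_self (by positivity), one_div, ← exp_neg, neg_neg]
  refine ⟨fun hn ↦ exp_lt_exp.2 ?_, fun hn ↦ ?_⟩
  · exact sum_eulerFactorLog_lt_one D natDegree hq hdeg hsum
      ((hcount 1 le_rfl).trans_eq (if_pos rfl)) (by exact_mod_cast hn)
  set k := Nat.log (Fintype.card Fq) m.natDegree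
  have hk : 1 ≤ k := Nat.le_log_of_pow_le hq₁ (by simpa using hn.le)
  have hkn : Fintype.card Fq ^ k ≤ m.natDegree := Nat.pow_log_le_self _ (by omega)
  have hnk : m.natDegree < Fintype.card Fq ^ (k + 1) := Nat.lt_pow_succ_log_self hq₁ _
  have hlog : 0 ≤ log m.natDegree / log (Fintype.card Fq) :=
    div_nonneg (log_natCast_nonneg _) (log_natCast_nonneg _)
  calc exp (∑ f ∈ D, eulerFactorLog (Fintype.card Fq) f.natDegree)
      ≤ exp (eulerMascheroniConstant + log (log m.natDegree / log (Fintype.card Fq) + 1)) :=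
        exp_le_exp.2 <| sum_eulerFactorLog_le_eulerMascheroniConstant_add_log D natDegree hq hk
          (by exact_mod_cast hkn) (by exact_mod_cast hnk.le) hdeg hsum hcount
    _ = _ := by rw [exp_add, exp_log (by linarith)]

/-- **Totient ratio bound (Lemma 4 of the paper).** For nonzero squarefree
`m ∈ F_q[T]` coprime to `T` (here `T` is `Polynomial.X`), with `D` the finite set
of monic irreducible divisors of `m`, `|m| = q^{deg m}` and
`φ(m) = |m|·∏_{ϖ ∈ D}(1 − 1/|ϖ|)`:
if `deg m ≤ q` then `|m|/φ(m) < e`, and if `deg m > q` then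
`|m|/φ(m) ≤ e^γ·(log_q(deg m) + 1)`. -/
theorem totient_ratio_bound (Fq : Type) [Field Fq] [Fintype Fq]
    (m : Polynomial Fq) (hm : m ≠ 0) (hsq : Squarefree m)
    (hT : IsCoprime m Polynomial.X)
    (D : Finset (Polynomial Fq))
    (hD : ∀ f : Polynomial Fq, f ∈ D ↔ f.Monic ∧ Irreducible f ∧ f ∣ m) :
    (m.natDegree ≤ Fintype.card Fq →
      (Fintype.card Fq : ℝ) ^ m.natDegree /
          ((Fintype.card Fq : ℝ) ^ m.natDegree *
            ∏ f ∈ D, (1 - ((Fintype.card Fq : ℝ) ^ f.natDegree)⁻¹))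
        < Real.exp 1) ∧
    (Fintype.card Fq < m.natDegree →
      (Fintype.card Fq : ℝ) ^ m.natDegree /
          ((Fintype.card Fq : ℝ) ^ m.natDegree *
            ∏ f ∈ D, (1 - ((Fintype.card Fq : ℝ) ^ f.natDegree)⁻¹))
        ≤ Real.exp Real.eulerMascheroniConstant *
            (Real.log m.natDegree / Real.log (Fintype.card Fq) + 1)) :=
  totient_ratio_bound_general Fq m hm hT D hD
end

section
/- Let x, y be integers with 1 ≤ y ≤ x < 2y (so ⌈x/y⌉ = 2), and let I ⊆ {1, …, x} with ρ = |I|/x > 0. Then there exists a set J of y consecutive integers contained in {1, …, x} such that |I ∩ J|/y ≤ (2/(ρ+1))·ρ. -/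
/-!
Cover `{1, …, x}` by the first and the last block of `y` consecutive integers; they overlap
in `2y - x` integers, so the two counts `|I ∩ J₁|`, `|I ∩ J₂|` add up to at most `|I| + 2y - x`
and the smaller one is at most `(|I| + 2y - x)/2`. Together with the trivial bound `|I|` this
gives the claim, the two bounds covering the cases `|I| + x > 2y` and `|I| + x ≤ 2y`.
-/

open Finset

lemma card_inter_add_card_inter_le_of_subset_union {α : Type*} [DecidableEq α]
    {I A B : Finset α} (hI : I ⊆ A ∪ B) :
    #(I ∩ A) + #(I ∩ B) ≤ #I + #(A ∩ B) := by
  have hunion : I ∩ A ∪ I ∩ B = I := by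
    rw [← inter_union_distrib_left, inter_eq_left.mpr hI]
  have hinter : I ∩ A ∩ (I ∩ B) ⊆ A ∩ B :=
    inter_subset_inter inter_subset_right inter_subset_right
  have := card_union_add_card_inter (I ∩ A) (I ∩ B)
  rw [hunion] at this
  have := card_le_card hinter
  omega

lemma mul_add_le_two_mul_mul {t m x y : ℕ} (htm : t ≤ m) (hmx : m ≤ x)
    (h : 2 * t + x ≤ m + 2 * y) : t * (m + x) ≤ 2 * m * y := by
  rcases le_or_gt (m + x) (2 * y) with hsmall | hlarge
  · nlinarith
  · -- `(m + 2y - x)(m + x) - 4my = (m - x)(m + x - 2y) ≤ 0`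
    nlinarith [Nat.mul_le_mul_left (m + x) h]

lemma div_le_two_div_add_one_mul {a m x y : ℕ} (hx : 0 < x)
    (h : a * (m + x) ≤ 2 * m * y) :
    (a : ℝ) / y ≤ (2 / ((m : ℝ) / x + 1)) * ((m : ℝ) / x) := by
  have hx' : (0 : ℝ) < x := by exact_mod_cast hx
  have hmx : (0 : ℝ) < m + x := by positivity
  have hrhs : (2 / ((m : ℝ) / x + 1)) * ((m : ℝ) / x) = 2 * m / (m + x) := by
    field_simp
  rw [hrhs]
  refine div_le_of_le_mul₀ (Nat.cast_nonneg y) (by positivity) ?_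
  rw [div_mul_eq_mul_div, le_div_iff₀ hmx]
  exact_mod_cast h

theorem covering_lemma_two_general (x y : ℕ) (hyx : y ≤ x) (hx : x < 2 * y)
    (I : Finset ℕ) (hI : I ⊆ Finset.Icc 1 x) :
    ∃ j : ℕ, 1 ≤ j ∧ j + y ≤ x + 1 ∧
      ((I ∩ Finset.Ico j (j + y)).card : ℝ) / y ≤
        (2 / ((I.card : ℝ) / x + 1)) * ((I.card : ℝ) / x) := by
  set A := Ico 1 (1 + y)
  set B := Ico (x - y + 1) (x - y + 1 + y)
  have hcover : I ⊆ A ∪ B := fun i hi => by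
    have := hI hi
    simp only [A, B, mem_union, mem_Ico, mem_Icc] at this ⊢
    omega
  have hoverlap : #(A ∩ B) + x ≤ 2 * y := by
    simp only [A, B, Ico_inter_Ico, Nat.card_Ico]
    omega
  have hsum := card_inter_add_card_inter_le_of_subset_union hcover
  have hm : #I ≤ x := by simpa using card_le_card hI
  have hA := card_le_card (inter_subset_left : I ∩ A ⊆ I)
  have hB := card_le_card (inter_subset_left : I ∩ B ⊆ I)
  rcases le_total #(I ∩ A) #(I ∩ B) with hAB | hBA
  · have hbound : 2 * #(I ∩ A) + x ≤ #I + 2 * y := by omega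
    exact ⟨1, le_rfl, by omega,
      div_le_two_div_add_one_mul (by omega) (mul_add_le_two_mul_mul hA hm hbound)⟩
  · have hbound : 2 * #(I ∩ B) + x ≤ #I + 2 * y := by omega
    exact ⟨x - y + 1, by omega, by omega,
      div_le_two_div_add_one_mul (by omega) (mul_add_le_two_mul_mul hB hm hbound)⟩

/-- **Covering lemma, case `u = 2`.** If `1 ≤ y ≤ x < 2y` and `I ⊆ {1, …, x}` is
nonempty with density `ρ = |I|/x`, then some block `J` of `y` consecutive integers
inside `{1, …, x}` satisfies `|I ∩ J|/y ≤ (2/(ρ+1))·ρ`. -/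
theorem covering_lemma_two (x y : ℕ) (hy : 1 ≤ y) (hyx : y ≤ x) (hx : x < 2 * y)
    (I : Finset ℕ) (hI : I ⊆ Finset.Icc 1 x) (hne : 0 < I.card) :
    ∃ j : ℕ, 1 ≤ j ∧ j + y ≤ x + 1 ∧
      ((I ∩ Finset.Ico j (j + y)).card : ℝ) / y ≤
        (2 / ((I.card : ℝ) / x + 1)) * ((I.card : ℝ) / x) :=
  covering_lemma_two_general x y hyx hx I hI
end

section
/- Let x, y be integers with 1 ≤ y ≤ x and let u = ⌈x/y⌉ ≥ 2, and let I ⊆ {1, …, x} with ρ = |I|/x > 0. Then there exists a set J of y consecutive integers contained in {1, …, x} such that |I ∩ J|/y ≤ κρ, where κ = 2u/((u−1)ρ + (u+1)) if u ≥ 3, κ = 2/(ρ+1) if u = 2, and κ = 1 if y | x. In particular κ ≤ 2 always. -/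
/-!
Let `B` be the least number of points of `I` in a window of `y` consecutive integers inside
`[1, x]`, let `M = |I|` and `u = ⌈x/y⌉`. Two lower bounds on `M` drive the proof.
Packing `u - 1` disjoint windows into `[1, x]` gives `(u - 1) B ≤ M`. Summing over all
`x - y + 1` windows counts each `i ∈ I` once per window containing it, which is `y` minus
`(y - i)⁺` minus `(i - (x + 1 - y))⁺`; the at least `B` points of `I` in the first window have
distinct deficiencies `y - i`, so these sum to at least `B (B - 1) / 2`, and symmetrically at the
right end. Hence `(x - y + B) B ≤ y M`. The claimed bound on `B / y` is linear in `M` once cleared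
of denominators, and it follows from the first lower bound when `B ≤ u y - x` and from the second
when `B ≥ u y - x`.
-/

open Finset

theorem Finset.card_mul_pred_le_two_mul_sum (s : Finset ℕ) :
    #s * (#s - 1) ≤ 2 * ∑ i ∈ s, i := by
  induction s using Finset.induction_on_max with
  | empty => simp
  | insert a s ha ih =>
    have ha' : a ∉ s := fun h => (ha a h).false
    have hcard : #s ≤ a := by simpa using card_le_card fun i hi => mem_range.2 (ha i hi)
    rw [Nat.mul_sub_one] at ih
    rw [card_insert_of_notMem ha', sum_insert ha', Nat.add_sub_cancel, add_one_mul]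
    omega

theorem mul_pred_le_two_mul_sum_of_injOn {α : Type*} {s : Finset α} {f : α → ℕ}
    (hf : Set.InjOn f s) {B : ℕ} (hB : B ≤ #s) : B * (B - 1) ≤ 2 * ∑ i ∈ s, f i := by
  classical
  calc B * (B - 1) ≤ #s * (#s - 1) := Nat.mul_le_mul hB (Nat.sub_le_sub_right hB 1)
    _ = #(s.image f) * (#(s.image f) - 1) := by rw [card_image_of_injOn hf]
    _ ≤ 2 * ∑ i ∈ s, f i := by
      simpa [sum_image hf] using (s.image f).card_mul_pred_le_two_mul_sum

theorem Nat.sub_one_mul_le_and_le_mul_add_sub_one_div {x y : ℕ} (hy : 0 < y) :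
    ((x + y - 1) / y - 1) * y ≤ x ∧ x ≤ (x + y - 1) / y * y := by
  have hle := Nat.div_mul_le_self (x + y - 1) y
  have hlt := Nat.lt_div_mul_add (a := x + y - 1) hy
  rw [Nat.sub_one_mul]
  omega

section Windows

variable {x y B : ℕ} {I : Finset ℕ}

theorem exists_forall_card_inter_Ico_le (I : Finset ℕ) (hyx : y ≤ x) :
    ∃ j, 1 ≤ j ∧ j + y ≤ x + 1 ∧
      ∀ k, 1 ≤ k → k + y ≤ x + 1 → #(I ∩ Ico j (j + y)) ≤ #(I ∩ Ico k (k + y)) := by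
  obtain ⟨j, hj, hmin⟩ := exists_min_image (Icc 1 (x + 1 - y))
    (fun j => #(I ∩ Ico j (j + y))) ⟨1, mem_Icc.2 ⟨le_rfl, by omega⟩⟩
  rw [mem_Icc] at hj
  exact ⟨j, hj.1, by omega, fun k hk hkx => hmin k (mem_Icc.2 ⟨hk, by omega⟩)⟩

theorem card_filter_mem_Ico_add_sub_add_sub {i : ℕ} (hyx : y ≤ x) (hi : i ∈ Icc 1 x) :
    #{j ∈ Icc 1 (x + 1 - y) | i ∈ Ico j (j + y)} + (y - i) + (i - (x + 1 - y)) = y := by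
  have : {j ∈ Icc 1 (x + 1 - y) | i ∈ Ico j (j + y)}
      = Icc (max 1 (i + 1 - y)) (min (x + 1 - y) i) := by
    ext j
    simp only [mem_filter, mem_Icc, mem_Ico]
    omega
  rw [mem_Icc] at hi
  rw [this, Nat.card_Icc]
  omega

theorem sum_card_inter_Ico_add_sum_sub_add_sum_sub (hyx : y ≤ x) (hI : I ⊆ Icc 1 x) :
    ∑ j ∈ Icc 1 (x + 1 - y), #(I ∩ Ico j (j + y)) + ∑ i ∈ I, (y - i)
      + ∑ i ∈ I, (i - (x + 1 - y)) = y * #I := by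
  have hcount := sum_card_bipartiteAbove_eq_sum_card_bipartiteBelow
    (s := Icc 1 (x + 1 - y)) (t := I) (fun j i => i ∈ Ico j (j + y))
  simp only [bipartiteAbove, bipartiteBelow, filter_mem_eq_inter] at hcount
  rw [hcount, ← sum_add_distrib, ← sum_add_distrib, mul_comm, ← smul_eq_mul, ← sum_const]
  exact sum_congr rfl fun i hi => card_filter_mem_Ico_add_sub_add_sub hyx (hI hi)

theorem mul_le_card_inter_Ico_of_forall_le
    (hmin : ∀ j, 1 ≤ j → j + y ≤ x + 1 → B ≤ #(I ∩ Ico j (j + y)))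
    {d : ℕ} (hd : d * y ≤ x) : d * B ≤ #(I ∩ Ico 1 (1 + d * y)) := by
  induction d with
  | zero => simp
  | succ d ih =>
    rw [add_one_mul] at hd
    have hsplit : I ∩ Ico 1 (1 + (d + 1) * y)
        = (I ∩ Ico 1 (1 + d * y)) ∪ (I ∩ Ico (1 + d * y) (1 + d * y + y)) := by
      rw [← inter_union_distrib_left, Ico_union_Ico_eq_Ico (by omega) (by omega), add_one_mul,
        add_assoc]
    have hdisj : Disjoint (I ∩ Ico 1 (1 + d * y)) (I ∩ Ico (1 + d * y) (1 + d * y + y)) :=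
      (Ico_disjoint_Ico_consecutive _ _ _).mono inter_subset_right inter_subset_right
    rw [hsplit, card_union_of_disjoint hdisj, add_one_mul]
    have := hmin (1 + d * y) (by omega) (by omega)
    have := ih (by omega)
    omega

theorem mul_le_card_of_forall_le
    (hmin : ∀ j, 1 ≤ j → j + y ≤ x + 1 → B ≤ #(I ∩ Ico j (j + y)))
    {d : ℕ} (hd : d * y ≤ x) : d * B ≤ #I :=
  (mul_le_card_inter_Ico_of_forall_le hmin hd).trans (card_le_card inter_subset_left)

theorem sub_add_mul_le_mul_card_of_forall_le
    (hmin : ∀ j, 1 ≤ j → j + y ≤ x + 1 → B ≤ #(I ∩ Ico j (j + y)))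
    (hyx : y ≤ x) (hI : I ⊆ Icc 1 x) : (x - y + B) * B ≤ y * #I := by
  have htotal := sum_card_inter_Ico_add_sum_sub_add_sum_sub hyx hI
  set N := x + 1 - y
  have hsum : N * B ≤ ∑ j ∈ Icc 1 N, #(I ∩ Ico j (j + y)) := by
    simpa using card_nsmul_le_sum (Icc 1 N) _ B fun j hj =>
      hmin j (mem_Icc.1 hj).1 (by have := (mem_Icc.1 hj).2; omega)
  have hleft : B * (B - 1) ≤ 2 * ∑ i ∈ I, (y - i) := by
    refine (mul_pred_le_two_mul_sum_of_injOn (s := I ∩ Ico 1 (1 + y)) ?_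
      (hmin 1 le_rfl (by omega))).trans
        (Nat.mul_le_mul_left 2 (sum_le_sum_of_subset inter_subset_left))
    intro a ha b hb hab
    simp only [coe_inter, Set.mem_inter_iff, mem_coe, mem_Ico] at ha hb
    omega
  have hright : B * (B - 1) ≤ 2 * ∑ i ∈ I, (i - N) := by
    refine (mul_pred_le_two_mul_sum_of_injOn (s := I ∩ Ico N (N + y)) ?_
      (hmin N (by omega) (by omega))).trans
        (Nat.mul_le_mul_left 2 (sum_le_sum_of_subset inter_subset_left))
    intro a ha b hb hab
    simp only [coe_inter, Set.mem_inter_iff, mem_coe, mem_Ico] at ha hb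
    dsimp only at hab
    omega
  calc (x - y + B) * B = N * B + B * (B - 1) := by
        rcases B with _ | B
        · simp
        · rw [show x - y + (B + 1) = N + B by omega, Nat.add_sub_cancel]
          ring
    _ ≤ y * #I := by omega

end Windows

theorem div_le_div_of_dvd_of_mul_le {x y B M : ℕ} (hy : 0 < y) (hyx : y ≤ x) (hdvd : y ∣ x)
    (h : x / y * B ≤ M) : (B : ℝ) / y ≤ M / x := by
  rw [div_le_div_iff₀ (by exact_mod_cast hy) (by exact_mod_cast hy.trans_le hyx)]
  have : B * x ≤ M * y := by
    calc B * x = x / y * B * y := by rw [mul_comm (x / y), mul_assoc, Nat.div_mul_cancel hdvd]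
      _ ≤ M * y := Nat.mul_le_mul_right y h
  exact_mod_cast this

theorem covering_bound_of_le_two_mul {x y M B : ℝ} (hx : 0 < x) (hM : 0 ≤ M) (hB : 0 ≤ B)
    (hBy : B ≤ y) (hxy : x ≤ 2 * y) (hBM : B ≤ M) (hslide : (x - y + B) * B ≤ y * M) :
    2 / (M / x + 1) ≤ 2 ∧ B / y ≤ 2 / (M / x + 1) * (M / x) := by
  have hy : 0 < y := by linarith
  refine ⟨div_le_self zero_le_two (by simpa using div_nonneg hM hx.le), ?_⟩
  have hκρ : 2 / (M / x + 1) * (M / x) = 2 * M / (M + x) := by field_simp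
  rw [hκρ, div_le_div_iff₀ hy (by positivity)]
  rcases le_total B (2 * y - x) with hBs | hBs
  · nlinarith [mul_le_mul_of_nonneg_left hBs hB,
      mul_le_mul_of_nonneg_left hBM (by linarith : 0 ≤ 2 * y - B)]
  · nlinarith [mul_nonneg (sub_nonneg.2 hBs) (sub_nonneg.2 hBy)]

theorem covering_bound_of_three_le {x y M B u : ℝ} (hx : 0 < x) (hM : 0 ≤ M) (hB : 0 ≤ B)
    (hBy : B ≤ y) (hu : 3 ≤ u) (hux : (u - 1) * y ≤ x) (hxu : x ≤ u * y)
    (hblocks : (u - 1) * B ≤ M) (hslide : (x - y + B) * B ≤ y * M) :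
    2 * u / ((u - 1) * (M / x) + (u + 1)) ≤ 2 ∧
      B / y ≤ 2 * u / ((u - 1) * (M / x) + (u + 1)) * (M / x) := by
  have hy : 0 < y := by nlinarith
  have hρ : 0 ≤ (u - 1) * (M / x) := mul_nonneg (by linarith) (div_nonneg hM hx.le)
  refine ⟨(div_le_iff₀ (by linarith)).2 (by linarith), ?_⟩
  have hκρ : 2 * u / ((u - 1) * (M / x) + (u + 1)) * (M / x)
      = 2 * u * M / ((u - 1) * M + (u + 1) * x) := by field_simp
  rw [hκρ, div_le_div_iff₀ hy (by nlinarith)]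
  set T := 2 * u * y - (u - 1) * B
  have hT : 0 ≤ T := by nlinarith
  suffices (u + 1) * B * x ≤ M * T by linarith
  rcases le_total B (u * y - x) with hBs | hBs
  · calc (u + 1) * B * x ≤ (u - 1) * B * T := by
          nlinarith [mul_nonneg hB (add_nonneg
            (mul_nonneg (sq_nonneg (u - 1)) (sub_nonneg.2 hBs))
            (mul_nonneg (mul_nonneg (by linarith : 0 ≤ u) (sub_nonneg.2 hu)) (sub_nonneg.2 hux)))]
      _ ≤ M * T := mul_le_mul_of_nonneg_right hblocks hT
  · refine le_of_mul_le_mul_left ?_ hy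
    calc y * ((u + 1) * B * x) ≤ (x - y + B) * B * T := by
          nlinarith [mul_nonneg hB (mul_nonneg (sub_nonneg.2 hBy) (add_nonneg
            (mul_nonneg (by linarith : 0 ≤ u - 1) (sub_nonneg.2 hBs))
            (mul_nonneg (mul_nonneg (by linarith : 0 ≤ u) (sub_nonneg.2 hu)) hy.le)))]
      _ ≤ y * M * T := mul_le_mul_of_nonneg_right hslide hT
      _ = y * (M * T) := mul_assoc _ _ _

-- `(x + y - 1) / y` is `⌈x / y⌉`.
noncomputable def coveringConstant (x y : ℕ) (ρ : ℝ) : ℝ :=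
  if y ∣ x then 1
  else if (x + y - 1) / y = 2 then 2 / (ρ + 1)
  else 2 * ((x + y - 1) / y : ℕ) /
    ((((x + y - 1) / y : ℕ) - 1 : ℝ) * ρ + (((x + y - 1) / y : ℕ) + 1))

theorem coveringConstant_le_two_and_div_le {x y B M : ℕ} (hy : 0 < y) (hyx : y ≤ x)
    (hBy : B ≤ y) (hblocks : ∀ d, d * y ≤ x → d * B ≤ M) (hslide : (x - y + B) * B ≤ y * M) :
    coveringConstant x y (M / x) ≤ 2 ∧ (B : ℝ) / y ≤ coveringConstant x y (M / x) * (M / x) := by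
  unfold coveringConstant
  by_cases hdvd : y ∣ x
  · simp only [if_pos hdvd, one_mul]
    exact ⟨one_le_two, div_le_div_of_dvd_of_mul_le hy hyx hdvd
      (hblocks _ (Nat.div_mul_le_self x y))⟩
  simp only [if_neg hdvd]
  obtain ⟨hux, hxu⟩ := Nat.sub_one_mul_le_and_le_mul_add_sub_one_div (x := x) hy
  set u := (x + y - 1) / y
  have hu : 1 < u := Nat.lt_of_mul_lt_mul_right (a := y) <| by
    have : y ≠ x := by rintro rfl; exact hdvd dvd_rfl
    omega
  have hx : (0 : ℝ) < x := by exact_mod_cast (by omega : 0 < x)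
  have hBy' : (B : ℝ) ≤ y := by exact_mod_cast hBy
  have hslide' : ((x : ℝ) - y + B) * B ≤ y * M := by
    rw [← Nat.cast_sub hyx]
    exact_mod_cast hslide
  have hblocks' : ((u : ℝ) - 1) * B ≤ M := by
    rw [← Nat.cast_pred (by omega)]
    exact_mod_cast hblocks _ hux
  have hux' : ((u : ℝ) - 1) * y ≤ x := by
    rw [← Nat.cast_pred (by omega)]
    exact_mod_cast hux
  have hxu' : (x : ℝ) ≤ u * y := by exact_mod_cast hxu
  split_ifs with hu2
  · have hu2 : (u : ℝ) = 2 := by exact_mod_cast hu2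
    rw [hu2] at hblocks' hxu'
    exact covering_bound_of_le_two_mul hx (by positivity) (by positivity) hBy' hxu'
      (by linarith) hslide'
  · exact covering_bound_of_three_le hx (by positivity) (by positivity) hBy'
      (by exact_mod_cast (by omega : 3 ≤ u)) hux' hxu' hblocks' hslide'

theorem covering_lemma_general (x y : ℕ) (hy : 1 ≤ y) (hyx : y ≤ x)
    (I : Finset ℕ) (hI : I ⊆ Finset.Icc 1 x) :
    (if y ∣ x then (1 : ℝ)
      else if (x + y - 1) / y = 2 then 2 / ((I.card : ℝ) / x + 1)
      else 2 * ((x + y - 1) / y : ℕ) /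
        ((((x + y - 1) / y : ℕ) - 1 : ℝ) * ((I.card : ℝ) / x) + (((x + y - 1) / y : ℕ) + 1)))
      ≤ 2 ∧
    ∃ j : ℕ, 1 ≤ j ∧ j + y ≤ x + 1 ∧
      ((I ∩ Finset.Ico j (j + y)).card : ℝ) / y ≤
        (if y ∣ x then (1 : ℝ)
          else if (x + y - 1) / y = 2 then 2 / ((I.card : ℝ) / x + 1)
          else 2 * ((x + y - 1) / y : ℕ) /
            ((((x + y - 1) / y : ℕ) - 1 : ℝ) * ((I.card : ℝ) / x) + (((x + y - 1) / y : ℕ) + 1)))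
        * ((I.card : ℝ) / x) := by
  obtain ⟨j, hj, hjx, hmin⟩ := exists_forall_card_inter_Ico_le I hyx
  obtain ⟨hκ, hbound⟩ := coveringConstant_le_two_and_div_le hy hyx
    ((card_le_card inter_subset_right).trans (by simp))
    (fun _ hd => mul_le_card_of_forall_le hmin hd)
    (sub_add_mul_le_mul_card_of_forall_le hmin hyx hI)
  exact ⟨hκ, j, hj, hjx, hbound⟩

/-- **Covering lemma (full form).** Let `1 ≤ y ≤ x`, `u = ⌈x/y⌉ ≥ 2`, and let
`I ⊆ {1, …, x}` be nonempty with density `ρ = |I|/x`. Then with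
`κ = 1` if `y ∣ x`, `κ = 2/(ρ+1)` if `u = 2`, and `κ = 2u/((u−1)ρ + (u+1))` if
`u ≥ 3`, we have `κ ≤ 2`, and some block `J` of `y` consecutive integers inside
`{1, …, x}` satisfies `|I ∩ J|/y ≤ κ·ρ`. -/
theorem covering_lemma (x y : ℕ) (hy : 1 ≤ y) (hyx : y ≤ x)
    (I : Finset ℕ) (hI : I ⊆ Finset.Icc 1 x) (hne : 0 < I.card)
    (hu : 2 ≤ (x + y - 1) / y) :
    (if y ∣ x then (1 : ℝ)
      else if (x + y - 1) / y = 2 then 2 / ((I.card : ℝ) / x + 1)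
      else 2 * ((x + y - 1) / y : ℕ) /
        ((((x + y - 1) / y : ℕ) - 1 : ℝ) * ((I.card : ℝ) / x) + (((x + y - 1) / y : ℕ) + 1)))
      ≤ 2 ∧
    ∃ j : ℕ, 1 ≤ j ∧ j + y ≤ x + 1 ∧
      ((I ∩ Finset.Ico j (j + y)).card : ℝ) / y ≤
        (if y ∣ x then (1 : ℝ)
          else if (x + y - 1) / y = 2 then 2 / ((I.card : ℝ) / x + 1)
          else 2 * ((x + y - 1) / y : ℕ) /
            ((((x + y - 1) / y : ℕ) - 1 : ℝ) * ((I.card : ℝ) / x) + (((x + y - 1) / y : ℕ) + 1)))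
        * ((I.card : ℝ) / x) :=
  covering_lemma_general x y hy hyx I hI
end
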